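/- arXiv:2506.15206 — 10 statements merged into one kernel-verified Lean document; each statement's English description precedes it below -/
import Mathlib

section
/- Let X be a Tychonoff (completely regular Hausdorff) space. Then X is a k_ℝ-space if and only if there exists a cover 𝓜 of X such that every M ∈ 𝓜 is a k_ℝ-space in its subspace topology and M ∩ M' is dense in X for all M, M' ∈ 𝓜. -/
open Set Filter Topology

/-- A function `f : X → ℝ` is `k`-continuous if its restriction to every compact subset
of `X` (with the subspace topology) is continuous. -/
def KContinuous {X : Type*} [TopologicalSpace X] (f : X → ℝ) : Prop :=
  ∀ K : Set X, IsCompact K → Continuous fun x : K => f x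

/-- A topological space `X` is a `k_ℝ`-space if every `k`-continuous real-valued function
on `X` is continuous. -/
def IsKRSpace (X : Type*) [TopologicalSpace X] : Prop :=
  ∀ f : X → ℝ, KContinuous f → Continuous f

lemma KContinuous.restrict {X : Type*} [TopologicalSpace X] {f : X → ℝ}
    (hf : KContinuous f) (M : Set X) : KContinuous (M.restrict f) := by
  intro K hK
  have h1 : IsCompact (Subtype.val '' K) := hK.image continuous_subtype_val
  have hφ : Continuous fun k : K => (⟨k.1.1, ⟨k.1, k.2, rfl⟩⟩ : ↥(Subtype.val '' K)) :=
    Continuous.subtype_mk (continuous_subtype_val.comp continuous_subtype_val) _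
  exact (hf _ h1).comp hφ

lemma IsKRSpace.of_homeomorph {X Y : Type*} [TopologicalSpace X] [TopologicalSpace Y]
    (e : X ≃ₜ Y) (h : IsKRSpace X) : IsKRSpace Y := by
  intro f hf
  have hfe : KContinuous (f ∘ e) := by
    intro K hK
    have h1 : IsCompact (e '' K) := hK.image e.continuous
    have hφ : Continuous fun k : K => (⟨e k.1, mem_image_of_mem e k.2⟩ : ↥(e '' K)) :=
      Continuous.subtype_mk (e.continuous.comp continuous_subtype_val) _
    exact (hf _ h1).comp hφ
  have h2 : Continuous ((f ∘ e) ∘ e.symm) := (h _ hfe).comp e.symm.continuous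
  simpa [Function.comp_def] using h2

theorem kR_iff_cover_by_kR_with_dense_intersections
    (X : Type*) [TopologicalSpace X] [CompletelyRegularSpace X] [T2Space X] :
    IsKRSpace X ↔
      ∃ 𝓜 : Set (Set X), (∀ x : X, ∃ M ∈ 𝓜, x ∈ M) ∧
        (∀ M ∈ 𝓜, IsKRSpace M) ∧
        ∀ M ∈ 𝓜, ∀ M' ∈ 𝓜, Dense (M ∩ M') := by
  constructor
  · intro h
    refine ⟨{Set.univ}, fun x => ⟨Set.univ, rfl, trivial⟩, ?_, ?_⟩
    · rintro M rfl
      exact IsKRSpace.of_homeomorph (Homeomorph.Set.univ X).symm h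
    · rintro M rfl M' rfl
      simp
  · rintro ⟨𝓜, hcov, hKR, hdense⟩ f hf
    have key : ∀ M ∈ 𝓜, ContinuousOn f M := fun M hM =>
      continuousOn_iff_continuous_restrict.2 (hKR M hM _ (hf.restrict M))
    rw [continuous_iff_continuousAt]
    intro x
    by_contra hx
    rw [ContinuousAt, Metric.tendsto_nhds] at hx
    push_neg at hx
    obtain ⟨ε, hε, hfreq⟩ := hx
    simp only [← not_lt] at hfreq
    obtain ⟨M₀, hM₀, hxM₀⟩ := hcov x
    have h0 := (Metric.tendsto_nhds.1 (key M₀ hM₀ x hxM₀)) (ε/3) (by linarith)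
    obtain ⟨U, hUo, hxU, hU⟩ := mem_nhdsWithin.1 h0
    obtain ⟨y, hy, hyU⟩ := (hfreq.and_eventually
      (eventually_mem_set.mpr (hUo.mem_nhds hxU))).exists
    obtain ⟨M₁, hM₁, hyM₁⟩ := hcov y
    have h1 := (Metric.tendsto_nhds.1 (key M₁ hM₁ y hyM₁)) (ε/3) (by linarith)
    obtain ⟨V, hVo, hyV, hV⟩ := mem_nhdsWithin.1 h1
    obtain ⟨z, hzM, hzUV⟩ := (hdense M₀ hM₀ M₁ hM₁).exists_mem_open (hUo.inter hVo)
      ⟨y, hyU, hyV⟩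
    have d1 : dist (f z) (f x) < ε/3 := hU ⟨hzUV.1, hzM.1⟩
    have d2 : dist (f z) (f y) < ε/3 := hV ⟨hzUV.2, hzM.2⟩
    have := dist_triangle (f y) (f z) (f x)
    rw [dist_comm (f y) (f z)] at this
    exact hy (by linarith)
end

section
/- Let G be a homogeneous Tychonoff space, i.e. for all x, y ∈ G there is a homeomorphism h : G → G with h(x) = y, and let H be a subspace of G that is k_ℝ-dense in G, meaning that for every x ∈ G there exists a subspace M ⊆ G which is a k_ℝ-space in its subspace topology and satisfies x ∈ M and x ∈ closure(M ∩ H). If H (with the subspace topology) is a k_ℝ-space, then G is a k_ℝ-space. -/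
/-!
Let `f : G → ℝ` be `k`-continuous. On every `k_ℝ`-subspace `f` is continuous, in particular on `H`
and on the spaces `M` witnessing `k_ℝ`-density. At a point `x₀` of `H` this already forces continuity
in `G`: take a closed neighbourhood `s` of `f x₀` and an open `u ∋ x₀` with `f (u ∩ H) ⊆ s`; every
`y ∈ u` lies in the closure of `u ∩ M ∩ H` for its witness `M`, and `f` is continuous on `M` at `y`,
so `f y ∈ s`. Since `k`-continuity is preserved by composing with homeomorphisms and `H` is
nonempty, homogeneity moves this continuity from a point of `H` to any point of `G`.
-/

open Set Filter Topology

theorem continuousAt_of_continuousWithinAt_of_forall_mem_closure {X Y : Type*}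
    [TopologicalSpace X] [TopologicalSpace Y] [RegularSpace Y] {f : X → Y} {H : Set X} {x₀ : X}
    (hH : ContinuousWithinAt f H x₀)
    (hM : ∀ y, ∃ M : Set X, ContinuousWithinAt f M y ∧ y ∈ closure (M ∩ H)) :
    ContinuousAt f x₀ := by
  refine (closed_nhds_basis (f x₀)).tendsto_right_iff.mpr fun s ⟨hs, hs_closed⟩ => ?_
  obtain ⟨u, hu_open, hx₀u, hu⟩ := mem_nhdsWithin.mp (hH hs)
  filter_upwards [hu_open.mem_nhds hx₀u] with y hyu
  obtain ⟨M, hfM, hy⟩ := hM y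
  have hy' : y ∈ closure (u ∩ (M ∩ H)) := hu_open.inter_closure ⟨hyu, hy⟩
  have hf_sub : f '' (u ∩ (M ∩ H)) ⊆ s :=
    image_subset_iff.mpr fun z hz => hu ⟨hz.1, hz.2.2⟩
  exact hs_closed.closure_subset_iff.mpr hf_sub
    ((hfM.mono fun z hz => hz.2.1).mem_closure_image hy')

namespace KContinuous

variable {X Y : Type*} [TopologicalSpace X] [TopologicalSpace Y] {f : X → ℝ}

theorem comp (hf : KContinuous f) {g : Y → X} (hg : Continuous g) : KContinuous (f ∘ g) :=
  fun _ hK => (hf _ (hK.image hg)).comp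
    ((hg.comp continuous_subtype_val).subtype_mk fun k => mem_image_of_mem g k.2)

theorem continuousOn (hf : KContinuous f) {S : Set X} (hS : IsKRSpace S) : ContinuousOn f S :=
  continuousOn_iff_continuous_domRestrict.mpr (hS _ (hf.comp continuous_subtype_val))

theorem continuousAt_of_mem {H : Set X} (hH : IsKRSpace H)
    (hdense : ∀ x : X, ∃ M : Set X, IsKRSpace M ∧ x ∈ M ∧ x ∈ closure (M ∩ H))
    (hf : KContinuous f) {x₀ : X} (hx₀ : x₀ ∈ H) : ContinuousAt f x₀ :=
  continuousAt_of_continuousWithinAt_of_forall_mem_closure (hf.continuousOn hH x₀ hx₀) fun y =>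
    let ⟨M, hM, hyM, hy⟩ := hdense y
    ⟨M, hf.continuousOn hM y hyM, hy⟩

end KContinuous

theorem kR_of_kR_dense_subspace_of_homogeneous_general
    (G : Type*) [TopologicalSpace G]
    (hhom : ∀ x y : G, ∃ h : G ≃ₜ G, h x = y)
    (H : Set G)
    (hdense : ∀ x : G, ∃ M : Set G, IsKRSpace M ∧ x ∈ M ∧ x ∈ closure (M ∩ H))
    (hH : IsKRSpace H) :
    IsKRSpace G := by
  intro f hf
  refine continuous_iff_continuousAt.mpr fun x => ?_
  obtain ⟨M, -, -, hx⟩ := hdense x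
  obtain ⟨x₀, -, hx₀⟩ := closure_nonempty_iff.mp ⟨x, hx⟩
  obtain ⟨h, rfl⟩ := hhom x₀ x
  exact (h.comp_continuousAt_iff' f x₀).mp
    ((hf.comp h.continuous).continuousAt_of_mem hH hdense hx₀)

theorem kR_of_kR_dense_subspace_of_homogeneous
    (G : Type*) [TopologicalSpace G] [CompletelyRegularSpace G] [T2Space G]
    (hhom : ∀ x y : G, ∃ h : G ≃ₜ G, h x = y)
    (H : Set G)
    (hdense : ∀ x : G, ∃ M : Set G, IsKRSpace M ∧ x ∈ M ∧ x ∈ closure (M ∩ H))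
    (hH : IsKRSpace H) :
    IsKRSpace G :=
  kR_of_kR_dense_subspace_of_homogeneous_general G hhom H hdense hH
end

section
/- Let X be a Tychonoff (completely regular Hausdorff) space. Then X is an s_ℝ-space if and only if there exists a cover 𝓜 of X such that every M ∈ 𝓜 is an s_ℝ-space in its subspace topology and M ∩ M' is dense in X for all M, M' ∈ 𝓜. -/
open Set Filter Topology

universe u

/-- A function `f : X → ℝ` is sequentially continuous if `f (x n) → f x` whenever a
sequence `(x n)` converges to `x` in `X`. -/
def SeqCont {X : Type*} [TopologicalSpace X] (f : X → ℝ) : Prop :=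
  ∀ (u : ℕ → X) (x : X), Tendsto u atTop (nhds x) →
    Tendsto (fun n => f (u n)) atTop (nhds (f x))

/-- A topological space `X` is an `s_ℝ`-space if every sequentially continuous real-valued
function on `X` is continuous. -/
def IsSRSpace (X : Type*) [TopologicalSpace X] : Prop :=
  ∀ f : X → ℝ, SeqCont f → Continuous f

/-!
Sequential continuity passes to subspaces, so a sequentially continuous `f` is continuous on
every `M ∈ 𝓜`. For continuity at `p ∈ M`, pick a closed neighbourhood `V` of `f p` and an open
`U ∋ p` with `f '' (U ∩ M) ⊆ V`. Any `x ∈ U` lies in some `M'`, and the dense set `M ∩ M'`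
accumulates at `x` inside `U`; continuity of `f` on `M'` then puts `f x` in the closure of
`f '' (U ∩ M)`, hence in `V`.
-/

section

variable {X Y : Type*} [TopologicalSpace X] [TopologicalSpace Y]

theorem SeqCont.comp_continuous {f : Y → ℝ} (hf : SeqCont f) {g : X → Y} (hg : Continuous g) :
    SeqCont (f ∘ g) :=
  fun _ _ hu => hf _ _ ((hg.tendsto _).comp hu)

theorem IsSRSpace.of_homeomorph (e : X ≃ₜ Y) (hX : IsSRSpace X) : IsSRSpace Y := by
  intro f hf
  have hfe : Continuous (f ∘ e) := hX _ (hf.comp_continuous e.continuous)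
  simpa [Function.comp_assoc] using hfe.comp e.symm.continuous

theorem SeqCont.continuousOn_of_isSRSpace {f : X → ℝ} (hf : SeqCont f) {M : Set X}
    (hM : IsSRSpace M) : ContinuousOn f M :=
  continuousOn_iff_continuous_domRestrict.2 <| hM _ (hf.comp_continuous continuous_subtype_val)

theorem mem_closure_image_inter_of_dense_inter {f : X → Y} {M M' U : Set X} {x : X}
    (hf : ContinuousWithinAt f M' x) (hU : IsOpen U) (hxU : x ∈ U) (hdense : Dense (M ∩ M')) :
    f x ∈ closure (f '' (U ∩ M)) := by
  have hx : x ∈ closure (U ∩ (M ∩ M')) := hdense.open_subset_closure_inter hU hxU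
  have hfx := (hf.mono (inter_subset_right.trans inter_subset_right)).mem_closure_image hx
  exact closure_mono (image_mono (inter_subset_inter_right U inter_subset_left)) hfx

theorem continuous_of_continuousOn_of_dense_inter [RegularSpace Y] {f : X → Y}
    {𝓜 : Set (Set X)} (hcov : ∀ x, ∃ M ∈ 𝓜, x ∈ M) (hf : ∀ M ∈ 𝓜, ContinuousOn f M)
    (hdense : ∀ M ∈ 𝓜, ∀ M' ∈ 𝓜, Dense (M ∩ M')) : Continuous f := by
  refine continuous_iff_continuousAt.2 fun p => (closed_nhds_basis (f p)).tendsto_right_iff.2 ?_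
  rintro V ⟨hV, hVclosed⟩
  obtain ⟨M, hM, hpM⟩ := hcov p
  obtain ⟨U, hUopen, hpU, hUV⟩ := mem_nhdsWithin.1 (hf M hM p hpM hV)
  filter_upwards [hUopen.mem_nhds hpU] with x hxU
  obtain ⟨M', hM', hxM'⟩ := hcov x
  have hfx := mem_closure_image_inter_of_dense_inter (hf M' hM' x hxM') hUopen hxU
    (hdense M hM M' hM')
  exact hVclosed.closure_subset_iff.2 (image_subset_iff.2 hUV) hfx

end

theorem sR_iff_cover_by_sR_with_dense_intersections_general
    (X : Type*) [TopologicalSpace X] :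
    IsSRSpace X ↔
      ∃ 𝓜 : Set (Set X), (∀ x : X, ∃ M ∈ 𝓜, x ∈ M) ∧
        (∀ M ∈ 𝓜, IsSRSpace M) ∧
        ∀ M ∈ 𝓜, ∀ M' ∈ 𝓜, Dense (M ∩ M') := by
  constructor
  · intro hX
    refine ⟨{univ}, fun x => ⟨univ, rfl, trivial⟩, ?_, ?_⟩
    · rintro M rfl
      exact hX.of_homeomorph (Homeomorph.Set.univ X).symm
    · rintro M rfl M' rfl
      simp
  · rintro ⟨𝓜, hcov, hsr, hdense⟩ f hf
    exact continuous_of_continuousOn_of_dense_inter hcov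
      (fun M hM => hf.continuousOn_of_isSRSpace (hsr M hM)) hdense

theorem sR_iff_cover_by_sR_with_dense_intersections
    (X : Type*) [TopologicalSpace X] [CompletelyRegularSpace X] [T2Space X] :
    IsSRSpace X ↔
      ∃ 𝓜 : Set (Set X), (∀ x : X, ∃ M ∈ 𝓜, x ∈ M) ∧
        (∀ M ∈ 𝓜, IsSRSpace M) ∧
        ∀ M ∈ 𝓜, ∀ M' ∈ 𝓜, Dense (M ∩ M') :=
  sR_iff_cover_by_sR_with_dense_intersections_general X
end

section
/- Let G be a homogeneous Tychonoff space, i.e. for all x, y ∈ G there is a homeomorphism h : G → G with h(x) = y, and let H be a subspace of G that is s_ℝ-dense in G, meaning that for every x ∈ G there exists a subspace M ⊆ G which is an s_ℝ-space in its subspace topology and satisfies x ∈ M and x ∈ closure(M ∩ H) (in particular this holds if H is sequentially dense, i.e. every point of G is the limit of a sequence of points of H). If H (with the subspace topology) is an s_ℝ-space, then G is an s_ℝ-space. -/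
open Set Filter Topology

universe u

theorem sR_of_sR_dense_subspace_of_homogeneous
    (G : Type*) [TopologicalSpace G] [CompletelyRegularSpace G] [T2Space G]
    (hhom : ∀ x y : G, ∃ h : G ≃ₜ G, h x = y)
    (H : Set G)
    (hdense : ∀ x : G, ∃ M : Set G, IsSRSpace M ∧ x ∈ M ∧ x ∈ closure (M ∩ H))
    (hH : IsSRSpace H) :
    IsSRSpace G := by
  intro f hf
  rw [continuous_iff_continuousAt]
  intro x
  by_contra hx
  have hx' : ¬ Tendsto f (𝓝 x) (𝓝 (f x)) := hx
  rw [Metric.tendsto_nhds] at hx'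
  push_neg at hx'
  obtain ⟨ε, hε, hfreq⟩ := hx'
  replace hfreq : ∃ᶠ y in 𝓝 x, ¬ dist (f y) (f x) < ε := hfreq.mono fun y hy => not_lt.mpr hy
  -- hfreq : ∃ᶠ y in 𝓝 x, ¬ dist (f y) (f x) < ε
  -- pick p ∈ H
  obtain ⟨M₀, -, -, hx0⟩ := hdense x
  have hMH : (M₀ ∩ H).Nonempty := by
    rcases eq_empty_or_nonempty (M₀ ∩ H) with h0 | h0
    · rw [h0, closure_empty] at hx0; exact absurd hx0 (notMem_empty x)
    · exact h0
  obtain ⟨p, -, hpH⟩ := hMH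
  obtain ⟨h, hpx⟩ := hhom p x
  -- the auxiliary sequentially continuous function
  set φ : G → ℝ := fun z => |f (h z) - f x| with hφdef
  have hφ : SeqCont φ := by
    intro u z hu
    have h1 : Tendsto (fun n => f (h (u n))) atTop (𝓝 (f (h z))) :=
      hf _ _ (((h.continuous.tendsto z)).comp hu)
    exact (h1.sub_const (f x)).abs
  -- restrictions to s_R subspaces are continuous
  have key : ∀ S : Set G, IsSRSpace S → Continuous (fun z : S => φ z) := by
    intro S hS
    apply hS
    intro u z hu
    exact hφ (fun n => (u n : G)) (z : G) ((continuous_subtype_val.tendsto z).comp hu)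
  -- continuity of φ|H at p : get open W with φ < ε/2 on W ∩ H
  have hHc := key H hH
  have hTopen : IsOpen {z : H | φ (z : G) < ε / 2} := by
    have : {z : H | φ (z : G) < ε / 2} = (fun z : H => φ z) ⁻¹' (Iio (ε / 2)) := rfl
    rw [this]
    exact hHc.isOpen_preimage _ isOpen_Iio
  rw [isOpen_induced_iff] at hTopen
  obtain ⟨W, hWopen, hWeq⟩ := hTopen
  have hpW : p ∈ W := by
    have : (⟨p, hpH⟩ : H) ∈ Subtype.val ⁻¹' W := by
      rw [hWeq]
      show φ p < ε / 2
      simp [hφdef, hpx, hε]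
    exact this
  have hWsmall : ∀ z ∈ W ∩ H, φ z < ε / 2 := by
    intro z hz
    have : (⟨z, hz.2⟩ : H) ∈ Subtype.val ⁻¹' W := hz.1
    rw [hWeq] at this
    exact this
  -- h '' W is a neighborhood of x; find a bad point b in W
  have hhW : h '' W ∈ 𝓝 x := by
    have : IsOpen (h '' W) := h.isOpenMap W hWopen
    exact this.mem_nhds ⟨p, hpW, hpx⟩
  obtain ⟨y, hybad, hyW⟩ :=
    (hfreq.and_eventually (show ∀ᶠ y in 𝓝 x, y ∈ h '' W from hhW)).exists
  obtain ⟨b, hbW, hby⟩ := hyW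
  have hbbad : ε ≤ φ b := by
    have : ¬ dist (f y) (f x) < ε := hybad
    rw [Real.dist_eq] at this
    have h2 : φ b = |f y - f x| := by rw [hφdef]; simp [hby]
    rw [h2]
    linarith [not_lt.mp this]
  -- the s_R set at b
  obtain ⟨Mb, hMb, hbMb, hbcl⟩ := hdense b
  have hMbc := key Mb hMb
  have hT2open : IsOpen {z : Mb | ε / 2 < φ (z : G)} := by
    have : {z : Mb | ε / 2 < φ (z : G)} = (fun z : Mb => φ z) ⁻¹' (Ioi (ε / 2)) := rfl
    rw [this]
    exact hMbc.isOpen_preimage _ isOpen_Ioi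
  rw [isOpen_induced_iff] at hT2open
  obtain ⟨V, hVopen, hVeq⟩ := hT2open
  have hbV : b ∈ V := by
    have : (⟨b, hbMb⟩ : Mb) ∈ Subtype.val ⁻¹' V := by
      rw [hVeq]
      show ε / 2 < φ b
      linarith
    exact this
  have hVbig : ∀ z ∈ V ∩ Mb, ε / 2 < φ z := by
    intro z hz
    have : (⟨z, hz.2⟩ : Mb) ∈ Subtype.val ⁻¹' V := hz.1
    rw [hVeq] at this
    exact this
  -- b ∈ closure (Mb ∩ H): find z in V ∩ W ∩ Mb ∩ H
  have hmem : b ∈ V ∩ W := ⟨hbV, hbW⟩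
  obtain ⟨z, hzVW, hzMb, hzH⟩ :
      ∃ z, z ∈ V ∩ W ∧ z ∈ Mb ∧ z ∈ H := by
    rcases mem_closure_iff.mp hbcl (V ∩ W) (hVopen.inter hWopen) hmem with ⟨z, hz1, hz2, hz3⟩
    exact ⟨z, hz1, hz2, hz3⟩
  have h1 : ε / 2 < φ z := hVbig z ⟨hzVW.1, hzMb⟩
  have h2 : φ z < ε / 2 := hWsmall z ⟨hzVW.2, hzH⟩
  linarith
end

section
/- Every s_ℝ-space X has countable ℝ-tightness; that is, for every discontinuous function f : X → ℝ there exists a countable subset A ⊆ X such that the restriction f↾A cannot be extended to a continuous real-valued function on all of X. -/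
open Set Filter Topology

universe u

/-- A convergent sequence together with its limit is a countable set, so a continuous
extension of `f` from it witnesses sequential continuity along that sequence. -/
theorem seqCont_of_forall_countable_exists_continuous_eqOn {X : Type*} [TopologicalSpace X]
    {f : X → ℝ} (h : ∀ A : Set X, A.Countable → ∃ g : X → ℝ, Continuous g ∧ ∀ x ∈ A, g x = f x) :
    SeqCont f := by
  intro u x hu
  obtain ⟨g, hg, hgf⟩ := h (insert x (range u)) ((countable_range u).insert x)
  have hgx : g x = f x := hgf x (mem_insert x _)
  have hgu : ∀ n, g (u n) = f (u n) := fun n => hgf (u n) (mem_insert_of_mem x ⟨n, rfl⟩)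
  simpa only [Function.comp_def, hgx, hgu] using (hg.tendsto x).comp hu

/-- Every `s_ℝ`-space has countable `ℝ`-tightness: every discontinuous real-valued
function has a restriction to some countable set that admits no continuous extension. -/
theorem sR_countable_R_tightness
    (X : Type*) [TopologicalSpace X] (hX : IsSRSpace X)
    (f : X → ℝ) (hf : ¬ Continuous f) :
    ∃ A : Set X, A.Countable ∧ ¬ ∃ g : X → ℝ, Continuous g ∧ ∀ x ∈ A, g x = f x := by
  by_contra! hext
  exact hf (hX f (seqCont_of_forall_countable_exists_continuous_eqOn hext))
end

section
/- Let X be a Tychonoff (completely regular Hausdorff) space which is an s_ℝ-space, and let U be an open subset of X. Then U, with the subspace topology, is an s_ℝ-space. -/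
open Set Filter Topology

universe u

/-!
Fix `x₀ ∈ U` and a continuous `ψ : X → ℝ` with `ψ x₀ ≠ 0` vanishing off `U` (complete
regularity). After replacing `f` by `arctan ∘ f` we may assume `f` bounded; then `ψ • f`,
extended by `0` outside `U`, is sequentially continuous on `X`: near points of `U` because `U`
is open, and at points where `ψ = 0` because it is squeezed by `C |ψ|`. Hence it is continuous,
and `f = (ψ • f) / ψ` is continuous near `x₀`.
-/

section

variable {X : Type*} {U : Set X}

noncomputable def mulExtendByZero (ψ : X → ℝ) (f : U → ℝ) (x : X) : ℝ :=
  open Classical in if h : x ∈ U then ψ x * f ⟨x, h⟩ else 0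

lemma mulExtendByZero_of_mem (ψ : X → ℝ) (f : U → ℝ) {x : X} (hx : x ∈ U) :
    mulExtendByZero ψ f x = ψ x * f ⟨x, hx⟩ := by
  simp [mulExtendByZero, hx]

lemma abs_mulExtendByZero_le {ψ : X → ℝ} (hψ : ∀ x ∉ U, ψ x = 0) {f : U → ℝ} {C : ℝ}
    (hf : ∀ y, |f y| ≤ C) (x : X) : |mulExtendByZero ψ f x| ≤ C * |ψ x| := by
  by_cases hx : x ∈ U
  · rw [mulExtendByZero_of_mem ψ f hx, abs_mul, mul_comm]
    exact mul_le_mul_of_nonneg_right (hf _) (abs_nonneg _)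
  · simp [mulExtendByZero, hx, hψ x hx]

variable [TopologicalSpace X]

lemma Continuous.comp_seqCont {φ : ℝ → ℝ} (hφ : Continuous φ) {f : X → ℝ} (hf : SeqCont f) :
    SeqCont (φ ∘ f) :=
  fun u x hu => (hφ.tendsto _).comp (hf u x hu)

lemma isSRSpace_of_bounded
    (h : ∀ f : X → ℝ, SeqCont f → (∃ C, ∀ x, |f x| ≤ C) → Continuous f) : IsSRSpace X := by
  intro f hf
  have harctan : Continuous (Real.arctan ∘ f) :=
    h _ (Real.continuous_arctan.comp_seqCont hf) ⟨Real.pi / 2, fun x =>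
      abs_le.2 ⟨(Real.arctan_mem_Ioo _).1.le, (Real.arctan_mem_Ioo _).2.le⟩⟩
  have htan : Continuous (Real.tan ∘ Real.arctan ∘ f) :=
    Real.continuousOn_tan_Ioo.comp_continuous harctan fun x => Real.arctan_mem_Ioo _
  simpa [Function.comp_def, Real.tan_arctan] using htan

lemma exists_seq_subtype_lift {u : ℕ → X} {x : U} (hu : Tendsto u atTop (𝓝 x))
    (hU : ∀ᶠ n in atTop, u n ∈ U) :
    ∃ v : ℕ → U, Tendsto v atTop (𝓝 x) ∧ ∀ᶠ n in atTop, (v n : X) = u n := by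
  classical
  refine ⟨fun n => if h : u n ∈ U then ⟨u n, h⟩ else x, ?_, ?_⟩
  · rw [tendsto_subtype_rng]
    refine hu.congr' ?_
    filter_upwards [hU] with n hn
    simp [dif_pos hn]
  · filter_upwards [hU] with n hn
    simp [dif_pos hn]

lemma IsOpen.exists_continuous_ne_zero_eq_zero_off [CompletelyRegularSpace X]
    (hU : IsOpen U) {x : X} (hx : x ∈ U) :
    ∃ ψ : X → ℝ, Continuous ψ ∧ ψ x ≠ 0 ∧ ∀ y ∉ U, ψ y = 0 := by
  obtain ⟨φ, hφ, hφx, hφU⟩ := CompletelyRegularSpace.completely_regular_isOpen x U hU hx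
  refine ⟨fun y => 1 - φ y, continuous_const.sub (continuous_subtype_val.comp hφ), ?_, ?_⟩
  · simp [hφx]
  · intro y hy
    simp [hφU hy]

lemma tendsto_mulExtendByZero_of_eq_zero {ψ : X → ℝ} (hψ : Continuous ψ)
    (hψU : ∀ x ∉ U, ψ x = 0) {f : U → ℝ} {C : ℝ} (hf : ∀ y, |f y| ≤ C) {u : ℕ → X} {x : X}
    (hu : Tendsto u atTop (𝓝 x)) (hx : ψ x = 0) :
    Tendsto (fun n => mulExtendByZero ψ f (u n)) atTop (𝓝 (mulExtendByZero ψ f x)) := by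
  have hzero : mulExtendByZero ψ f x = 0 :=
    abs_nonpos_iff.1 (by simpa [hx] using abs_mulExtendByZero_le hψU hf x)
  have hbound : Tendsto (fun n => C * |ψ (u n)|) atTop (𝓝 0) := by
    simpa [hx] using (((hψ.tendsto x).comp hu).abs).const_mul C
  rw [hzero]
  exact squeeze_zero_norm (fun n => abs_mulExtendByZero_le hψU hf (u n)) hbound

lemma tendsto_mulExtendByZero_of_mem (hU : IsOpen U) {ψ : X → ℝ} (hψ : Continuous ψ)
    {f : U → ℝ} (hf : SeqCont f) {u : ℕ → X} {x : X} (hu : Tendsto u atTop (𝓝 x))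
    (hx : x ∈ U) :
    Tendsto (fun n => mulExtendByZero ψ f (u n)) atTop (𝓝 (mulExtendByZero ψ f x)) := by
  have hev : ∀ᶠ n in atTop, u n ∈ U := hu (hU.mem_nhds hx)
  obtain ⟨v, hv, hvu⟩ := exists_seq_subtype_lift (x := ⟨x, hx⟩) hu hev
  rw [mulExtendByZero_of_mem ψ f hx]
  refine (((hψ.tendsto x).comp hu).mul (hf v _ hv)).congr' ?_
  filter_upwards [hev, hvu] with n hn hvn
  have hvn' : v n = ⟨u n, hn⟩ := Subtype.ext hvn
  simp only [Function.comp_apply, mulExtendByZero_of_mem ψ f hn, hvn']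

lemma seqCont_mulExtendByZero (hU : IsOpen U) {ψ : X → ℝ} (hψ : Continuous ψ)
    (hψU : ∀ x ∉ U, ψ x = 0) {f : U → ℝ} (hf : SeqCont f) {C : ℝ} (hfC : ∀ y, |f y| ≤ C) :
    SeqCont (mulExtendByZero ψ f) := by
  intro u x hu
  by_cases hx : ψ x = 0
  · exact tendsto_mulExtendByZero_of_eq_zero hψ hψU hfC hu hx
  · exact tendsto_mulExtendByZero_of_mem hU hψ hf hu (not_imp_comm.1 (hψU x) hx)

lemma continuousAt_of_continuous_mulExtendByZero {ψ : X → ℝ} (hψ : Continuous ψ) {f : U → ℝ}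
    (hg : Continuous (mulExtendByZero ψ f)) {x : U} (hx : ψ x ≠ 0) : ContinuousAt f x := by
  have hquot : ContinuousAt (fun y : U => mulExtendByZero ψ f y / ψ y) x :=
    ((hg.comp continuous_subtype_val).continuousAt).div
      ((hψ.comp continuous_subtype_val).continuousAt) hx
  refine hquot.congr ?_
  filter_upwards [(hψ.comp continuous_subtype_val).continuousAt.eventually_ne hx] with y hy
  rw [mulExtendByZero_of_mem ψ f y.2]
  exact mul_div_cancel_left₀ (f y) hy

end

theorem sR_open_subspace_general
    (X : Type*) [TopologicalSpace X] [CompletelyRegularSpace X]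
    (hX : IsSRSpace X) (U : Set X) (hU : IsOpen U) :
    IsSRSpace U := by
  refine isSRSpace_of_bounded fun f hf ⟨C, hfC⟩ => continuous_iff_continuousAt.2 fun x => ?_
  obtain ⟨ψ, hψ, hψx, hψU⟩ := hU.exists_continuous_ne_zero_eq_zero_off x.2
  exact continuousAt_of_continuous_mulExtendByZero hψ
    (hX _ (seqCont_mulExtendByZero hU hψ hψU hf hfC)) hψx

theorem sR_open_subspace
    (X : Type*) [TopologicalSpace X] [CompletelyRegularSpace X] [T2Space X]
    (hX : IsSRSpace X) (U : Set X) (hU : IsOpen U) :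
    IsSRSpace U :=
  sR_open_subspace_general X hX U hU
end

section
/- Let 𝓜₀ and 𝓜 be covers of a topological space X with 𝓜₀ ⊆ 𝓜, and assume that each M ∈ 𝓜₀ is 𝓜-dense in X, i.e. for every x ∈ X there is M' ∈ 𝓜 such that x ∈ M' and x ∈ closure(M' ∩ M). Then X is strongly functionally generated by 𝓜. -/
/-!
Let `f : X → ℝ` be continuous on every member of `𝓜` and fix `x`, lying in some `M₀ ∈ 𝓜₀`.
Given a closed neighbourhood `V` of `f x`, continuity on `M₀` gives an open `U ∋ x` with
`f '' (U ∩ M₀) ⊆ V`. Every `y ∈ U` lies in some `M ∈ 𝓜` with `y ∈ closure (M ∩ M₀ ∩ U)`, so by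
continuity of `f` on `M`, `f y ∈ closure (f '' (U ∩ M₀)) ⊆ V`. Hence `f` is continuous at `x`.
-/

open Set Filter Topology

/-- `X` is strongly functionally generated by a family `𝓜` of subsets if every
discontinuous `f : X → ℝ` has a discontinuous restriction to some `M ∈ 𝓜`. -/
def StronglyFunctionallyGeneratedBy (X : Type*) [TopologicalSpace X] (𝓜 : Set (Set X)) : Prop :=
  ∀ f : X → ℝ, ¬ Continuous f → ∃ M ∈ 𝓜, ¬ Continuous fun x : M => f x

/-- A subset `A ⊆ X` is `𝓜`-dense if for every `x ∈ X` there is `M ∈ 𝓜` such that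
`x ∈ M` and `x ∈ closure (M ∩ A)`. -/
def MDense {X : Type*} [TopologicalSpace X] (𝓜 : Set (Set X)) (A : Set X) : Prop :=
  ∀ x : X, ∃ M ∈ 𝓜, x ∈ M ∧ x ∈ closure (M ∩ A)

theorem stronglyFunctionallyGeneratedBy_iff {X : Type*} [TopologicalSpace X]
    {𝓜 : Set (Set X)} :
    StronglyFunctionallyGeneratedBy X 𝓜 ↔
      ∀ f : X → ℝ, (∀ M ∈ 𝓜, ContinuousOn f M) → Continuous f := by
  simp only [StronglyFunctionallyGeneratedBy, continuousOn_iff_continuous_domRestrict,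
    Set.domRestrict_def]
  refine forall_congr' fun f => ?_
  rw [not_imp_comm]
  push Not
  rfl

section

variable {X Y : Type*} [TopologicalSpace X] [TopologicalSpace Y]
  {𝓜 : Set (Set X)} {A : Set X} {f : X → Y}

theorem MDense.image_subset_closure_image_inter (hA : MDense 𝓜 A)
    (hf : ∀ M ∈ 𝓜, ContinuousOn f M) {U : Set X} (hU : IsOpen U) :
    f '' U ⊆ closure (f '' (U ∩ A)) := by
  rintro _ ⟨y, hyU, rfl⟩
  obtain ⟨M, hM𝓜, hyM, hyA⟩ := hA y
  have hy : y ∈ closure (U ∩ (M ∩ A)) := hU.inter_closure ⟨hyU, hyA⟩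
  have hcont : ContinuousWithinAt f (U ∩ (M ∩ A)) y :=
    (hf M hM𝓜 y hyM).mono fun z hz => hz.2.1
  exact closure_mono (image_mono (inter_subset_inter_right U inter_subset_right))
    (hcont.mem_closure_image hy)

theorem MDense.continuousAt_of_continuousWithinAt [RegularSpace Y] (hA : MDense 𝓜 A)
    (hf : ∀ M ∈ 𝓜, ContinuousOn f M) {x : X} (hfx : ContinuousWithinAt f A x) :
    ContinuousAt f x := by
  refine (closed_nhds_basis (f x)).tendsto_right_iff.2 ?_
  rintro V ⟨hV, hVclosed⟩
  obtain ⟨U, hUopen, hxU, hUA⟩ := mem_nhdsWithin.1 (hfx hV)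
  refine mem_of_superset (hUopen.mem_nhds hxU) fun y hy => ?_
  have hUA' : f '' (U ∩ A) ⊆ V := image_subset_iff.2 hUA
  exact hVclosed.closure_subset_iff.2 hUA'
    (hA.image_subset_closure_image_inter hf hUopen (mem_image_of_mem f hy))

end

theorem stronglyFunctionallyGeneratedBy_of_MDense_general
    {X : Type*} [TopologicalSpace X] (𝓜₀ 𝓜 : Set (Set X))
    (hsub : 𝓜₀ ⊆ 𝓜)
    (hcover₀ : ∀ x : X, ∃ M ∈ 𝓜₀, x ∈ M)
    (hdense : ∀ M ∈ 𝓜₀, MDense 𝓜 M) :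
    StronglyFunctionallyGeneratedBy X 𝓜 := by
  refine stronglyFunctionallyGeneratedBy_iff.2 fun f hf => continuous_iff_continuousAt.2 fun x => ?_
  obtain ⟨M₀, hM₀, hxM₀⟩ := hcover₀ x
  exact (hdense M₀ hM₀).continuousAt_of_continuousWithinAt hf (hf M₀ (hsub hM₀) x hxM₀)

theorem stronglyFunctionallyGeneratedBy_of_MDense
    {X : Type*} [TopologicalSpace X] (𝓜₀ 𝓜 : Set (Set X))
    (hsub : 𝓜₀ ⊆ 𝓜)
    (hcover₀ : ∀ x : X, ∃ M ∈ 𝓜₀, x ∈ M)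
    (hcover : ∀ x : X, ∃ M ∈ 𝓜, x ∈ M)
    (hdense : ∀ M ∈ 𝓜₀, MDense 𝓜 M) :
    StronglyFunctionallyGeneratedBy X 𝓜 :=
  stronglyFunctionallyGeneratedBy_of_MDense_general 𝓜₀ 𝓜 hsub hcover₀ hdense
end

section
/- Let X be a separable Tychonoff space such that every countable subspace of X (with the subspace topology) is Fréchet–Urysohn. Then X is strongly sequentially separable and X is an s_ℝ-space. -/
open Set Filter Topology TopologicalSpace

universe u

/-- A space is strongly sequentially separable if it is separable and every countable dense
subset is sequentially dense. -/
def StronglySeqSeparable (Y : Type*) [TopologicalSpace Y] : Prop :=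
  SeparableSpace Y ∧
    ∀ D : Set Y, D.Countable → Dense D →
      ∀ y : Y, ∃ u : ℕ → Y, (∀ n, u n ∈ D) ∧ Tendsto u atTop (nhds y)

theorem stronglySeqSeparable_sR_of_countable_FU
    (X : Type*) [TopologicalSpace X] [CompletelyRegularSpace X] [T2Space X]
    [SeparableSpace X]
    (hFU : ∀ A : Set X, A.Countable → FrechetUrysohnSpace A) :
    StronglySeqSeparable X ∧ IsSRSpace X := by
  -- Key step: every countable dense set is sequentially dense
  have key : ∀ D : Set X, D.Countable → Dense D →
      ∀ y : X, ∃ u : ℕ → X, (∀ n, u n ∈ D) ∧ Tendsto u atTop (nhds y) := by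
    intro D hDc hDd y
    set A : Set X := insert y D with hAdef
    have hA : A.Countable := hDc.insert y
    haveI := hFU A hA
    have hyA : y ∈ A := mem_insert y D
    have hy : (⟨y, hyA⟩ : A) ∈
        closure ((Subtype.val : A → X) ⁻¹' D) := by
      rw [closure_subtype]
      have himg : (Subtype.val : A → X) '' (Subtype.val ⁻¹' D) = D := by
        rw [Subtype.image_preimage_coe]
        exact inter_eq_right.mpr (subset_insert y D)
      rw [himg]
      exact hDd y
    obtain ⟨u, hu, hconv⟩ := mem_closure_iff_seq_limit.mp hy
    refine ⟨fun n => (u n : X), fun n => hu n, ?_⟩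
    exact (continuous_subtype_val.tendsto _).comp hconv
  have hsep : SeparableSpace X := inferInstance
  refine ⟨⟨hsep, key⟩, ?_⟩
  -- s_ℝ
  intro f hf
  obtain ⟨D, hDc, hDd⟩ := exists_countable_dense X
  rw [continuous_iff_continuousAt]
  intro x
  by_contra hnc
  rw [ContinuousAt, Metric.tendsto_nhds] at hnc
  push_neg at hnc
  obtain ⟨ε, hε, hfreq⟩ := hnc
  replace hfreq : ∃ᶠ y in nhds x, ¬dist (f y) (f x) < ε := hfreq.mono fun y hy => not_lt.mpr hy
  -- the set of points of D whose image is far from f x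
  set S : Set X := {d | d ∈ D ∧ ε / 2 ≤ dist (f d) (f x)} with hS
  have hSc : S.Countable := hDc.mono fun d hd => hd.1
  have hxS : x ∈ closure S := by
    rw [mem_closure_iff_nhds]
    intro t ht
    have hfreq' : ∃ᶠ y in nhds x, ¬dist (f y) (f x) < ε ∧ y ∈ interior t :=
      hfreq.and_eventually (interior_mem_nhds.mpr ht)
    obtain ⟨y, hy1, hy2⟩ := hfreq'.exists
    push_neg at hy1
    obtain ⟨u, hu, hconv⟩ := key D hDc hDd y
    have h1 : ∀ᶠ n in atTop, u n ∈ interior t :=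
      hconv (isOpen_interior.mem_nhds hy2)
    have h2 : ∀ᶠ n in atTop, dist (f (u n)) (f y) < ε / 2 :=
      Metric.tendsto_nhds.mp (hf u y hconv) (ε / 2) (by linarith)
    obtain ⟨n, hn1, hn2⟩ := (h1.and h2).exists
    refine ⟨u n, interior_subset hn1, hu n, ?_⟩
    have := dist_triangle (f y) (f (u n)) (f x)
    rw [dist_comm (f y) (f (u n))] at this
    linarith
  -- now use Fréchet–Urysohn on the countable set insert x S
  set B : Set X := insert x S with hBdef
  have hAc : B.Countable := hSc.insert x
  haveI := hFU B hAc
  have hxA : x ∈ B := mem_insert x S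
  have hx : (⟨x, hxA⟩ : B) ∈
      closure ((Subtype.val : B → X) ⁻¹' S) := by
    rw [closure_subtype]
    have himg : (Subtype.val : B → X) '' (Subtype.val ⁻¹' S) = S := by
      rw [Subtype.image_preimage_coe]
      exact inter_eq_right.mpr (subset_insert x S)
    rw [himg]
    exact hxS
  obtain ⟨v, hv, hvconv⟩ := mem_closure_iff_seq_limit.mp hx
  have hwconv : Tendsto (fun n => (v n : X)) atTop (nhds x) :=
    (continuous_subtype_val.tendsto _).comp hvconv
  have hfconv := hf (fun n => (v n : X)) x hwconv
  have h3 : ∀ᶠ n in atTop, dist (f (v n : X)) (f x) < ε / 2 :=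
    Metric.tendsto_nhds.mp hfconv (ε / 2) (by linarith)
  obtain ⟨n, hn⟩ := h3.exists
  exact absurd (hv n).2 (by linarith)
end

section
/- Let X be a Tychonoff (completely regular Hausdorff) space having exactly one non-isolated point. Then C_p(X) is a k_ℝ-space. -/
open Set Filter Topology

section Aux

variable {X : Type*} [TopologicalSpace X]

lemma box_isOpen (B : Finset X) (f : X → ℝ) (η : ℝ) :
    IsOpen {h : X → ℝ | ∀ x ∈ B, |h x - f x| < η} := by
  have heq : {h : X → ℝ | ∀ x ∈ B, |h x - f x| < η}
      = ⋂ x ∈ B, {h : X → ℝ | |h x - f x| < η} := by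
    ext h; simp
  rw [heq]
  refine isOpen_biInter_finset fun x _ => ?_
  exact isOpen_lt (((continuous_apply x).sub continuous_const).abs) continuous_const

lemma mem_nhds_pi_box {f : X → ℝ} {s : Set (X → ℝ)} (hs : s ∈ 𝓝 f) :
    ∃ (B : Finset X) (η : ℝ), 0 < η ∧ {h : X → ℝ | ∀ x ∈ B, |h x - f x| < η} ⊆ s := by
  classical
  rw [nhds_pi, Filter.mem_pi] at hs
  obtain ⟨I, hIfin, t, ht, hsub⟩ := hs
  have hr : ∀ x : X, ∃ r : ℝ, 0 < r ∧ Metric.ball (f x) r ⊆ t x := fun x =>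
    Metric.mem_nhds_iff.mp (ht x)
  choose r hrpos hrsub using hr
  set J : Finset X := hIfin.toFinset with hJ
  set M : Finset ℝ := insert 1 (J.image r) with hM
  have hMne : M.Nonempty := ⟨1, Finset.mem_insert_self _ _⟩
  set η : ℝ := M.min' hMne with hη
  have hηpos : 0 < η := by
    have hmem : η ∈ M := M.min'_mem hMne
    rw [hM, Finset.mem_insert] at hmem
    rcases hmem with h | h
    · rw [h]; norm_num
    · obtain ⟨x, _, hx⟩ := Finset.mem_image.mp h
      rw [← hx]; exact hrpos x
  have hηle : ∀ x ∈ J, η ≤ r x := fun x hx =>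
    Finset.min'_le _ _ (Finset.mem_insert_of_mem (Finset.mem_image_of_mem r hx))
  refine ⟨J, η, hηpos, ?_⟩
  intro h hh
  apply hsub
  rw [Set.mem_pi]
  intro x hxI
  have hxJ : x ∈ J := hIfin.mem_toFinset.mpr hxI
  apply hrsub x
  rw [Metric.mem_ball, Real.dist_eq]
  exact lt_of_lt_of_le (hh x hxJ) (hηle x hxJ)

lemma continuous_of_dominated_at (x₀ : X)
    (hiso : ∀ x : X, x ≠ x₀ → IsOpen ({x} : Set X))
    {f₀ : X → ℝ} (hf₀ : Continuous f₀) {c : X → ℝ} (hc : Tendsto c (𝓝 x₀) (𝓝 0))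
    {h : X → ℝ} (hb : ∀ x, |h x - f₀ x - (h x₀ - f₀ x₀)| ≤ c x) : Continuous h := by
  rw [continuous_iff_continuousAt]
  intro x
  by_cases hx : x = x₀
  · subst hx
    have h1 : Tendsto (fun y => h y - f₀ y - (h x - f₀ x)) (𝓝 x) (𝓝 0) :=
      squeeze_zero_norm (fun y => by simpa [Real.norm_eq_abs] using hb y) hc
    have h2 : Tendsto (fun y => (h y - f₀ y - (h x - f₀ x)) + (f₀ y + (h x - f₀ x)))
        (𝓝 x) (𝓝 (0 + (f₀ x + (h x - f₀ x)))) :=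
      h1.add ((hf₀.tendsto x).add tendsto_const_nhds)
    have heq : (fun y => (h y - f₀ y - (h x - f₀ x)) + (f₀ y + (h x - f₀ x))) = h := by
      funext y; ring
    have hval : (0 : ℝ) + (f₀ x + (h x - f₀ x)) = h x := by ring
    rw [heq, hval] at h2
    exact h2
  · have hpure : 𝓝 x = pure x := le_antisymm
      (le_pure_iff.mpr ((hiso x hx).mem_nhds rfl)) (pure_le_nhds x)
    rw [ContinuousAt, hpure]
    exact tendsto_pure_nhds h x

lemma isCompact_dominated (x₀ : X) (f₀ c : X → ℝ) :
    IsCompact {h : X → ℝ | |h x₀ - f₀ x₀| ≤ 1 ∧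
      ∀ x, |h x - f₀ x - (h x₀ - f₀ x₀)| ≤ c x} := by
  have hclosed : IsClosed {h : X → ℝ | |h x₀ - f₀ x₀| ≤ 1 ∧
      ∀ x, |h x - f₀ x - (h x₀ - f₀ x₀)| ≤ c x} := by
    have heq : {h : X → ℝ | |h x₀ - f₀ x₀| ≤ 1 ∧
        ∀ x, |h x - f₀ x - (h x₀ - f₀ x₀)| ≤ c x}
        = {h : X → ℝ | |h x₀ - f₀ x₀| ≤ 1} ∩
          ⋂ x, {h : X → ℝ | |h x - f₀ x - (h x₀ - f₀ x₀)| ≤ c x} := by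
      ext h; simp [Set.mem_iInter]
    rw [heq]
    refine IsClosed.inter ?_ (isClosed_iInter fun x => ?_)
    · exact isClosed_le (((continuous_apply x₀).sub continuous_const).abs) continuous_const
    · exact isClosed_le ((((continuous_apply x).sub continuous_const).sub
        ((continuous_apply x₀).sub continuous_const)).abs) continuous_const
  refine IsCompact.of_isClosed_subset
    (isCompact_univ_pi fun x => isCompact_Icc
      (a := f₀ x - (1 + c x)) (b := f₀ x + (1 + c x))) hclosed ?_
  intro h hh
  rw [Set.mem_univ_pi]
  intro x
  have h1 := hh.1
  have h2 := hh.2 x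
  have habs : |h x - f₀ x| ≤ 1 + c x := by
    have h3 := abs_add_le (h x - f₀ x - (h x₀ - f₀ x₀)) (h x₀ - f₀ x₀)
    have heq : h x - f₀ x - (h x₀ - f₀ x₀) + (h x₀ - f₀ x₀) = h x - f₀ x := by ring
    rw [heq] at h3
    linarith
  have hle := abs_le.mp habs
  rw [Set.mem_Icc]
  constructor <;> linarith [hle.1, hle.2]

end Aux

/-- If `X` is a Tychonoff space with exactly one non-isolated point, then `C_p(X)` is a
`k_ℝ`-space. -/
theorem Cp_kR_of_one_nonisolated_point
    (X : Type*) [TopologicalSpace X] [CompletelyRegularSpace X] [T2Space X]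
    (x₀ : X) (hx₀ : ¬ IsOpen ({x₀} : Set X))
    (hiso : ∀ x : X, x ≠ x₀ → IsOpen ({x} : Set X)) :
    IsKRSpace {f : X → ℝ // Continuous f} := by
  classical
  intro φ hφ
  rw [continuous_iff_continuousAt]
  by_contra hnc
  push_neg at hnc
  obtain ⟨f₀, hf₀⟩ := hnc
  have hnt : ¬ Tendsto φ (𝓝 f₀) (𝓝 (φ f₀)) := hf₀
  rw [Metric.tendsto_nhds] at hnt
  push_neg at hnt
  obtain ⟨ε, hε, hev⟩ := hnt
  have hnb : ∀ N ∈ 𝓝 f₀, ∃ g ∈ N, ε ≤ dist (φ g) (φ f₀) := by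
    intro N hN
    by_contra hcon
    push_neg at hcon
    exact hev (Filter.mem_of_superset hN fun g hg => (not_le.mpr (hcon g hg) : ¬ ε ≤ dist (φ g) (φ f₀)))
  -- key stage lemma
  have key : ∀ (n : ℕ) (A : Finset X), ∃ (h : X → ℝ) (hh : Continuous h) (B : Finset X),
      ε / 2 ≤ dist (φ ⟨h, hh⟩) (φ f₀) ∧
      (∀ x ∈ insert x₀ A, |h x - f₀.1 x| < 1 / (n + 1 : ℝ)) ∧
      (∀ x, x ∉ B → |h x - f₀.1 x| < 1 / (n + 1 : ℝ)) := by
    intro n A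
    set δ : ℝ := 1 / (n + 1 : ℝ) with hδdef
    have hδ : 0 < δ := by positivity
    have hδ1 : δ ≤ 1 := by
      rw [hδdef, div_le_one (by positivity)]
      have : (0 : ℝ) ≤ (n : ℝ) := Nat.cast_nonneg n
      linarith
    -- raw witness g
    have hNopen : IsOpen {h : X → ℝ | ∀ x ∈ insert x₀ A, |h x - f₀.1 x| < δ} :=
      box_isOpen _ _ _
    have hNmem : f₀ ∈ Subtype.val ⁻¹' {h : X → ℝ | ∀ x ∈ insert x₀ A, |h x - f₀.1 x| < δ} := by
      intro x
      simpa using fun _ => hδ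
    obtain ⟨g, hgN, hgd⟩ := hnb _ ((hNopen.preimage continuous_subtype_val).mem_nhds hNmem)
    simp only [Set.mem_preimage, Set.mem_setOf_eq] at hgN
    -- the compact set of dominated functions
    set c : X → ℝ := fun x => |g.1 x - f₀.1 x - (g.1 x₀ - f₀.1 x₀)| with hcdef
    have hccont : Continuous c := ((g.2.sub f₀.2).sub continuous_const).abs
    have hc0 : Tendsto c (𝓝 x₀) (𝓝 0) := by
      have h1 := hccont.tendsto x₀
      have h2 : c x₀ = 0 := by simp [hcdef]
      rwa [h2] at h1
    set P : Set (X → ℝ) := {h | |h x₀ - f₀.1 x₀| ≤ 1 ∧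
      ∀ x, |h x - f₀.1 x - (h x₀ - f₀.1 x₀)| ≤ c x} with hPdef
    have hPcont : ∀ h ∈ P, Continuous h := fun h hh =>
      continuous_of_dominated_at x₀ hiso f₀.2 hc0 hh.2
    have hPcomp : IsCompact P := isCompact_dominated x₀ f₀.1 c
    set LC : Set {f : X → ℝ // Continuous f} := Subtype.val ⁻¹' P with hLCdef
    have hLCcomp : IsCompact LC := by
      rw [IsEmbedding.subtypeVal.isInducing.isCompact_iff]
      have himg : Subtype.val '' LC = P :=
        Set.image_preimage_eq_of_subset (fun h hh => ⟨⟨h, hPcont h hh⟩, rfl⟩)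
      rw [himg]
      exact hPcomp
    have hgP : g ∈ LC := by
      refine ⟨?_, ?_⟩
      · exact le_trans (le_of_lt (hgN x₀ (Finset.mem_insert_self _ _))) hδ1
      · intro x
        exact le_of_eq rfl
    -- continuity of φ on LC at g
    have hcK : Continuous fun k : LC => φ k := hφ LC hLCcomp
    have hS : (fun k : LC => φ k) ⁻¹' Metric.ball (φ g) (ε / 2) ∈ 𝓝 (⟨g, hgP⟩ : LC) :=
      hcK.continuousAt.preimage_mem_nhds (Metric.ball_mem_nhds _ (by linarith))
    rw [nhds_subtype_eq_comap] at hS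
    obtain ⟨T1, hT1, hT1sub⟩ := Filter.mem_comap.mp hS
    rw [nhds_subtype_eq_comap] at hT1
    obtain ⟨T, hT, hTsub⟩ := Filter.mem_comap.mp hT1
    obtain ⟨B, η, hηpos, hbox⟩ := mem_nhds_pi_box hT
    have hclose : ∀ (h : {f : X → ℝ // Continuous f}) (hhP : h ∈ LC),
        (∀ x ∈ B, |h.1 x - g.1 x| < η) → dist (φ h) (φ g) < ε / 2 := by
      intro h hhP hB
      have h1 : h.1 ∈ T := hbox hB
      have h3 : h ∈ T1 := hTsub h1
      have h5 := hT1sub (show (⟨h, hhP⟩ : LC) ∈ Subtype.val ⁻¹' T1 from h3)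
      simpa [Metric.mem_ball] using h5
    -- the tamed witness
    set t : ℝ := g.1 x₀ - f₀.1 x₀ with htdef
    set hfun : X → ℝ := fun x => if x ∈ insert x₀ B then g.1 x else f₀.1 x + t with hfdef
    have hx0 : hfun x₀ = g.1 x₀ := by
      simp only [hfdef]
      rw [if_pos (Finset.mem_insert_self _ _)]
    have hfunP : hfun ∈ P := by
      refine ⟨?_, ?_⟩
      · rw [hx0]
        exact le_trans (le_of_lt (hgN x₀ (Finset.mem_insert_self _ _))) hδ1
      · intro x
        by_cases hxB : x ∈ insert x₀ B
        · have hfx : hfun x = g.1 x := by simp only [hfdef]; rw [if_pos hxB]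
          exact le_of_eq (by rw [hfx, hx0])
        · have hfx : hfun x = f₀.1 x + t := by simp only [hfdef]; rw [if_neg hxB]
          rw [hfx, hx0]
          have h9 : f₀.1 x + t - f₀.1 x - (g.1 x₀ - f₀.1 x₀) = 0 := by
            simp only [htdef]; ring
          rw [h9, abs_zero]
          exact abs_nonneg _
    have hfc : Continuous hfun := hPcont _ hfunP
    have hfLC : (⟨hfun, hfc⟩ : {f : X → ℝ // Continuous f}) ∈ LC := hfunP
    have hdist2 : dist (φ ⟨hfun, hfc⟩) (φ g) < ε / 2 := by
      refine hclose _ hfLC fun x hx => ?_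
      show |hfun x - g.1 x| < η
      have hfx : hfun x = g.1 x := by
        simp only [hfdef]; rw [if_pos (Finset.mem_insert_of_mem hx)]
      rw [hfx]
      simpa using hηpos
    refine ⟨hfun, hfc, B, ?_, ?_, ?_⟩
    · have htri := dist_triangle (φ g) (φ ⟨hfun, hfc⟩) (φ f₀)
      have hcomm : dist (φ g) (φ ⟨hfun, hfc⟩) = dist (φ ⟨hfun, hfc⟩) (φ g) := dist_comm _ _
      linarith
    · intro x hx
      by_cases hxB : x ∈ insert x₀ B
      · have hfx : hfun x = g.1 x := by simp only [hfdef]; rw [if_pos hxB]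
        rw [hfx]
        exact hgN x hx
      · have hfx : hfun x = f₀.1 x + t := by simp only [hfdef]; rw [if_neg hxB]
        rw [hfx]
        have heq2 : f₀.1 x + t - f₀.1 x = t := by ring
        rw [heq2, htdef]
        exact hgN x₀ (Finset.mem_insert_self _ _)
    · intro x hxB
      by_cases hxx : x = x₀
      · subst hxx
        rw [hx0]
        exact hgN x (Finset.mem_insert_self _ _)
      · have hxB' : x ∉ insert x₀ B := by
          simp [Finset.mem_insert, hxx, hxB]
        have hfx : hfun x = f₀.1 x + t := by simp only [hfdef]; rw [if_neg hxB']
        rw [hfx]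
        have heq2 : f₀.1 x + t - f₀.1 x = t := by ring
        rw [heq2, htdef]
        exact hgN x₀ (Finset.mem_insert_self _ _)
  -- recursion
  choose Hf Hc HB Hdist HboundA HboundB using key
  let A : ℕ → Finset X := fun n => Nat.rec ∅ (fun m Am => Am ∪ HB m Am) n
  have hAs : ∀ n, A (n + 1) = A n ∪ HB n (A n) := fun n => rfl
  have hmono : ∀ {m n : ℕ}, m ≤ n → A m ⊆ A n := by
    intro m n h
    induction h with
    | refl => exact subset_rfl
    | step h ih =>
        rename_i k hk
        exact ih.trans (by rw [hAs]; exact Finset.subset_union_left)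
  set u : ℕ → {f : X → ℝ // Continuous f} := fun n => ⟨Hf n (A n), Hc n (A n)⟩ with hu
  have hulim : Tendsto u atTop (𝓝 f₀) := by
    rw [tendsto_subtype_rng, tendsto_pi_nhds]
    intro x
    have hbound : ∀ᶠ n : ℕ in atTop, |Hf n (A n) x - f₀.1 x| ≤ 1 / (n + 1 : ℝ) := by
      by_cases hxB : ∃ m, x ∈ HB m (A m)
      · obtain ⟨m, hm⟩ := hxB
        refine eventually_atTop.mpr ⟨m + 1, fun n hn => ?_⟩
        have hxA : x ∈ A n := hmono hn (by rw [hAs]; exact Finset.mem_union_right _ hm)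
        exact le_of_lt (HboundA n (A n) x (Finset.mem_insert_of_mem hxA))
      · push_neg at hxB
        exact Eventually.of_forall fun n => le_of_lt (HboundB n (A n) x (hxB n))
    have h0 : Tendsto (fun n : ℕ => Hf n (A n) x - f₀.1 x) atTop (𝓝 0) :=
      squeeze_zero_norm' (hbound.mono fun n h => by simpa [Real.norm_eq_abs] using h)
        tendsto_one_div_add_atTop_nhds_zero_nat
    have h1 := h0.add (tendsto_const_nhds (x := f₀.1 x) (f := atTop))
    simpa using h1
  have hKcomp : IsCompact (insert f₀ (Set.range u)) := hulim.isCompact_insert_range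
  have hcont := hφ _ hKcomp
  set pt : ↥(insert f₀ (Set.range u)) := ⟨f₀, Set.mem_insert _ _⟩ with hpt
  have hseq : Tendsto (fun n => (⟨u n, Set.mem_insert_of_mem _ ⟨n, rfl⟩⟩ :
      ↥(insert f₀ (Set.range u)))) atTop (𝓝 pt) := by
    rw [tendsto_subtype_rng]
    exact hulim
  have hφlim : Tendsto (fun n => φ (u n)) atTop (𝓝 (φ f₀)) :=
    (hcont.tendsto pt).comp hseq
  have hevent := Metric.tendsto_nhds.mp hφlim (ε / 2) (by linarith)
  obtain ⟨n, hn⟩ := hevent.exists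
  exact absurd hn (not_lt.mpr (Hdist n (A n)))
end

section
/- Let X be a Tychonoff (completely regular Hausdorff) space such that C_p(X) is strongly sequentially separable. Then C_p(X) is an s_ℝ-space, and the following are equivalent: (i) X^n is Lindelöf for every natural number n; (ii) C_p(X) has countable tightness (for every set A ⊆ C_p(X) and every f ∈ closure(A) there is a countable B ⊆ A with f ∈ closure(B)); (iii) C_p(X) is Fréchet–Urysohn. -/
open Set Filter Topology TopologicalSpace

universe u

/-- A space has countable tightness if every point in the closure of a set lies in the
closure of a countable subset of that set. -/
def CountableTightness (Y : Type*) [TopologicalSpace Y] : Prop :=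
  ∀ A : Set Y, ∀ y ∈ closure A, ∃ B ⊆ A, B.Countable ∧ y ∈ closure B

section CpAux

abbrev CpX (X : Type u) [TopologicalSpace X] : Type u := {f : X → ℝ // Continuous f}

variable {X : Type u} [TopologicalSpace X]

instance : Nonempty (CpX X) := ⟨⟨fun _ => 0, continuous_const⟩⟩


lemma cp_mem_closure_iff {S : Set (CpX X)} {y : CpX X} :
    y ∈ closure S ↔ ∀ (F : Finset X) (ε : ℝ), 0 < ε →
      ∃ s ∈ S, ∀ x ∈ F, |s.1 x - y.1 x| < ε := by
  constructor
  · intro h F ε hε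
    have hV : (↑F : Set X).pi (fun x => Metric.ball (y.1 x) ε) ∈ 𝓝 y.1 :=
      set_pi_mem_nhds F.finite_toSet (fun a _ => Metric.ball_mem_nhds _ hε)
    have hU : Subtype.val ⁻¹' ((↑F : Set X).pi (fun x => Metric.ball (y.1 x) ε)) ∈ 𝓝 y := by
      rw [show 𝓝 y = comap Subtype.val (𝓝 y.1) from nhds_induced _ _]
      exact preimage_mem_comap hV
    rcases mem_closure_iff_nhds.1 h _ hU with ⟨s, hs1, hs2⟩
    refine ⟨s, hs2, fun x hx => ?_⟩
    have hmem : ∀ i ∈ (↑F : Set X), s.1 i ∈ Metric.ball (y.1 i) ε := by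
      simpa [Set.mem_pi] using hs1
    have := hmem x (by exact_mod_cast hx)
    rwa [Metric.mem_ball, Real.dist_eq] at this
  · intro h
    rw [mem_closure_iff_nhds]
    intro t ht
    rw [show 𝓝 y = comap Subtype.val (𝓝 y.1) from nhds_induced _ _, mem_comap] at ht
    rcases ht with ⟨V, hV, hVt⟩
    rw [nhds_pi, Filter.mem_pi] at hV
    rcases hV with ⟨I, hIfin, tt, htt, hsub⟩
    have hball : ∀ i : X, ∃ ε : ℝ, 0 < ε ∧ Metric.ball (y.1 i) ε ⊆ tt i := by
      intro i
      rcases Metric.mem_nhds_iff.1 (htt i) with ⟨ε, hε, hb⟩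
      exact ⟨ε, hε, hb⟩
    choose ε hεpos hεsub using hball
    rcases (hIfin.toFinset).eq_empty_or_nonempty with he | hne
    · rcases h ∅ 1 one_pos with ⟨s, hsS, _⟩
      refine ⟨s, hVt ?_, hsS⟩
      have : I = ∅ := by
        simpa [Set.Finite.toFinset_eq_empty] using he
      apply hsub
      simp [this]
    · obtain ⟨a, haF, hamin⟩ := Finset.exists_min_image _ ε hne
      rcases h hIfin.toFinset (ε a) (hεpos a) with ⟨s, hsS, hs⟩
      refine ⟨s, hVt (hsub ?_), hsS⟩
      intro i hi
      apply hεsub i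
      rw [Metric.mem_ball, Real.dist_eq]
      have hi' : i ∈ hIfin.toFinset := hIfin.mem_toFinset.2 hi
      exact lt_of_lt_of_le (hs i hi') (hamin i hi')

lemma cp_tendsto_iff {u : ℕ → CpX X} {y : CpX X} :
    Tendsto u atTop (𝓝 y) ↔ ∀ x, Tendsto (fun k => (u k).1 x) atTop (𝓝 (y.1 x)) := by
  rw [tendsto_subtype_rng, tendsto_pi_nhds]

lemma cp_dense_iff {S : Set (CpX X)} :
    Dense S ↔ ∀ (y : CpX X) (F : Finset X) (ε : ℝ), 0 < ε →
      ∃ s ∈ S, ∀ x ∈ F, |s.1 x - y.1 x| < ε := by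
  constructor
  · intro h y
    exact cp_mem_closure_iff.1 (h y)
  · intro h y
    exact cp_mem_closure_iff.2 (h y)
/-- The auxiliary scalar function used to build "plateau" functions. -/
noncomputable def phifn (t : ℝ) : ℝ := max 0 (min 1 (2*t - 1/2))

lemma phifn_cont : Continuous phifn :=
  continuous_const.max (continuous_const.min (by fun_prop))

lemma phifn_zero {t : ℝ} (h : t ≤ 1/4) : phifn t = 0 := by
  have : 2*t - 1/2 ≤ 0 := by linarith
  simp only [phifn]
  rw [max_eq_left]
  exact le_trans (min_le_right _ _) this

lemma phifn_one {t : ℝ} (h : 3/4 ≤ t) : phifn t = 1 := by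
  have h1 : (1:ℝ) ≤ 2*t - 1/2 := by linarith
  simp only [phifn]
  rw [min_eq_left h1, max_eq_right zero_le_one]

lemma phifn_mem (t : ℝ) : 0 ≤ phifn t ∧ phifn t ≤ 1 :=
  ⟨le_max_left _ _, max_le zero_le_one (min_le_left _ _)⟩

/-- Main extraction lemma: in a strongly sequentially separable `C_p(X)`, every point in the
closure of a countable set is the limit of a sequence from that set. -/
lemma cp_extract [CompletelyRegularSpace X] [T2Space X]
    (hsss : StronglySeqSeparable (CpX X)) {B : Set (CpX X)} (hB : B.Countable)
    {y : CpX X} (hy : y ∈ closure B) :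
    ∃ u : ℕ → CpX X, (∀ n, u n ∈ B) ∧ Tendsto u atTop (𝓝 y) := by
  classical
  by_cases hfin : Finite X
  · haveI : MetrizableSpace (CpX X) := Topology.IsEmbedding.subtypeVal.metrizableSpace
    exact mem_closure_iff_seq_limit.1 hy
  haveI : Infinite X := not_finite_iff_infinite.mp hfin
  haveI : SeparableSpace (CpX X) := hsss.1
  obtain ⟨D0, hD0c, hD0d⟩ := exists_countable_dense (CpX X)
  have hD0ne : D0.Nonempty := hD0d.nonempty
  obtain ⟨e, he⟩ := hD0c.exists_eq_range hD0ne
  have hBne : B.Nonempty := by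
    rcases B.eq_empty_or_nonempty with h | h
    · rw [h] at hy; simp at hy
    · exact h
  obtain ⟨b, hbB⟩ := hB.exists_eq_range hBne
  set E : ℕ → X → ℝ := fun m => (e m).1 with hE
  have hEc : ∀ m, Continuous (E m) := fun m => (e m).2
  set βf : ℕ → X → ℝ := fun i x => phifn (E i x) with hβf
  have hβc : ∀ i, Continuous (βf i) := fun i => phifn_cont.comp (hEc i)
  set G : ℕ → ℕ → X → ℝ := fun j n x => max 0 (1 - (n:ℝ) * |(b j).1 x - y.1 x|) with hG
  have hGc : ∀ j n, Continuous (G j n) := by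
    intro j n
    have h1 : Continuous fun x => (b j).1 x - y.1 x := (b j).2.sub y.2
    exact continuous_const.max (continuous_const.sub (continuous_const.mul h1.abs))
  set w : ℕ × ℕ × ℕ × ℕ → CpX X := fun p =>
    ⟨fun x => E p.1 x * βf p.2.1 x * G p.2.2.1 p.2.2.2 x + y.1 x,
      (((hEc p.1).mul (hβc p.2.1)).mul (hGc p.2.2.1 p.2.2.2)).add y.2⟩ with hw
  set S : Set (ℕ × ℕ × ℕ × ℕ) := {p | (∃ z, βf p.2.1 z = 0) ∧ p.1 + p.2.1 ≤ p.2.2.2} with hS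
  set D : Set (CpX X) := w '' S with hD
  have hDc : D.Countable := (S.to_countable).image w
  -- approximation by the dense set
  have hEapprox : ∀ (h : X → ℝ), Continuous h → ∀ (F : Finset X) (ε : ℝ), 0 < ε →
      ∃ m, ∀ x ∈ F, |E m x - h x| < ε := by
    intro h hc F ε hε
    rcases cp_mem_closure_iff.1 (hD0d ⟨h, hc⟩) F ε hε with ⟨s, hsD, hs⟩
    rw [he] at hsD
    obtain ⟨m, rfl⟩ := hsD
    exact ⟨m, hs⟩
  have hBapprox : ∀ (F : Finset X) (ε : ℝ), 0 < ε →
      ∃ j, ∀ x ∈ F, |(b j).1 x - y.1 x| < ε := by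
    intro F ε hε
    rcases cp_mem_closure_iff.1 hy F ε hε with ⟨s, hsB, hs⟩
    rw [hbB] at hsB
    obtain ⟨j, rfl⟩ := hsB
    exact ⟨j, hs⟩
  -- plateau functions
  have hβ : ∀ F : Finset X, ∃ i, (∃ z, βf i z = 0) ∧ ∀ x ∈ F, βf i x = 1 := by
    intro F
    obtain ⟨z, hz⟩ := Infinite.exists_notMem_finset F
    obtain ⟨γ₀, hγc₀, hγz₀, hγK₀⟩ := CompletelyRegularSpace.completely_regular z (↑F : Set X)
      (F.finite_toSet.isClosed) (by exact_mod_cast hz)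
    set γ : X → ℝ := fun x => ((γ₀ x : ℝ)) with hγdef
    have hγc : Continuous γ := continuous_subtype_val.comp hγc₀
    have hγz : γ z = 0 := by rw [hγdef]; simp [hγz₀]
    have hγK : ∀ x ∈ F, γ x = 1 := by
      intro x hx
      have := hγK₀ (by exact_mod_cast hx : x ∈ (↑F : Set X))
      rw [hγdef]
      simp only [this]
      rfl
    obtain ⟨i, hi⟩ := hEapprox γ hγc (insert z F) (1/4) (by norm_num)
    refine ⟨i, ⟨z, ?_⟩, ?_⟩
    · have h1 := hi z (Finset.mem_insert_self z F)
      rw [hγz] at h1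
      apply phifn_zero
      rw [abs_sub_lt_iff] at h1
      linarith [h1.1]
    · intro x hx
      have h1 := hi x (Finset.mem_insert_of_mem hx)
      have h2 : γ x = 1 := hγK x hx
      rw [h2] at h1
      apply phifn_one
      rw [abs_sub_lt_iff] at h1
      linarith [h1.2]
  -- density of D
  have hDd : Dense D := by
    rw [cp_dense_iff]
    intro h F ε hε
    obtain ⟨m, hm⟩ := hEapprox (fun x => h.1 x - y.1 x) (h.2.sub y.2) F (ε/2) (half_pos hε)
    obtain ⟨i, hzero, hone⟩ := hβ F
    set n : ℕ := m + i with hn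
    set C : ℕ := F.sup (fun x => ⌈|E m x|⌉₊) with hC
    set δ : ℝ := ε / (2 * ((n:ℝ) + 1) * ((C:ℝ) + 1)) with hδ
    have hδpos : 0 < δ := by
      apply div_pos hε
      positivity
    obtain ⟨j, hj⟩ := hBapprox F δ hδpos
    refine ⟨w (m, i, j, n), ⟨(m, i, j, n), ⟨hzero, le_refl _⟩, rfl⟩, ?_⟩
    intro x hx
    have hb1 : βf i x = 1 := hone x hx
    have hEb : |E m x| ≤ (C:ℝ) := by
      calc |E m x| ≤ (⌈|E m x|⌉₊ : ℝ) := Nat.le_ceil _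
      _ ≤ (C:ℝ) := by
          have hle : ⌈|E m x|⌉₊ ≤ C := Finset.le_sup (f := fun x => ⌈|E m x|⌉₊) hx
          exact_mod_cast hle
    have hGb : 0 ≤ 1 - G j n x ∧ 1 - G j n x ≤ (n:ℝ) * δ := by
      constructor
      · have : G j n x ≤ 1 := by
          apply max_le _ (by nlinarith [abs_nonneg ((b j).1 x - y.1 x), Nat.cast_nonneg (α := ℝ) n])
          linarith
        linarith
      · have h1 : 1 - (n:ℝ) * |(b j).1 x - y.1 x| ≤ G j n x := le_max_right _ _
        have h2 : (n:ℝ) * |(b j).1 x - y.1 x| ≤ (n:ℝ) * δ := by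
          apply mul_le_mul_of_nonneg_left (le_of_lt (hj x hx)) (Nat.cast_nonneg n)
        linarith
    have key : |E m x * G j n x - (h.1 x - y.1 x)| < ε := by
      have h3 : |E m x - (h.1 x - y.1 x)| < ε/2 := hm x hx
      have h4 : |E m x * G j n x - E m x| ≤ (C:ℝ) * ((n:ℝ) * δ) := by
        have : E m x * G j n x - E m x = E m x * (G j n x - 1) := by ring
        rw [this, abs_mul]
        apply mul_le_mul hEb _ (abs_nonneg _) (Nat.cast_nonneg C)
        rw [abs_sub_comm, abs_of_nonneg hGb.1]
        exact hGb.2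
      have h5 : (C:ℝ) * ((n:ℝ) * δ) ≤ ε/2 := by
        rw [hδ]
        have hCn : (C:ℝ) * (n:ℝ) ≤ ((C:ℝ)+1) * ((n:ℝ)+1) := by nlinarith [Nat.cast_nonneg (α := ℝ) C, Nat.cast_nonneg (α := ℝ) n]
        calc (C:ℝ) * ((n:ℝ) * (ε / (2 * ((n:ℝ) + 1) * ((C:ℝ) + 1))))
            = ((C:ℝ) * (n:ℝ)) * (ε / (2 * ((n:ℝ) + 1) * ((C:ℝ) + 1))) := by ring
          _ ≤ (((C:ℝ)+1) * ((n:ℝ)+1)) * (ε / (2 * ((n:ℝ) + 1) * ((C:ℝ) + 1))) := by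
              apply mul_le_mul_of_nonneg_right hCn (le_of_lt (by positivity))
          _ = ε/2 := by field_simp
      calc |E m x * G j n x - (h.1 x - y.1 x)|
          ≤ |E m x * G j n x - E m x| + |E m x - (h.1 x - y.1 x)| := abs_sub_le _ _ _
        _ < (C:ℝ) * ((n:ℝ) * δ) + ε/2 := by linarith
        _ ≤ ε/2 + ε/2 := by linarith
        _ = ε := by ring
    show |(E m x * βf i x * G j n x + y.1 x) - h.1 x| < ε
    rw [hb1]
    have : E m x * 1 * G j n x + y.1 x - h.1 x = E m x * G j n x - (h.1 x - y.1 x) := by ring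
    rw [this]
    exact key
  -- apply strong sequential separability at the target 1 + y
  obtain ⟨u, huD, hut⟩ := hsss.2 D hDc hDd ⟨fun x => 1 + y.1 x, continuous_const.add y.2⟩
  have hchoice : ∀ k, ∃ p : ℕ × ℕ × ℕ × ℕ, p ∈ S ∧ w p = u k := fun k => huD k
  choose p hpS hpw using hchoice
  have hpt : ∀ x, Tendsto (fun k => (u k).1 x) atTop (𝓝 (1 + y.1 x)) := by
    have := cp_tendsto_iff.1 hut
    exact this
  -- indices n (p k).2.2.2 tend to infinity
  have hninf : Tendsto (fun k => (p k).2.2.2) atTop atTop := by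
    rw [Filter.tendsto_atTop]
    intro C
    by_contra hc
    have hfreq : ∃ᶠ k in atTop, (p k).2.2.2 < C := by
      rw [Filter.not_eventually] at hc
      apply hc.mono
      intro k hk
      exact lt_of_not_ge hk
    have hCpos : 0 < C := by
      rcases Nat.eq_zero_or_pos C with h | h
      · exfalso
        rcases hfreq.exists with ⟨k, hk⟩
        omega
      · exact h
    have hinf : {k | (p k).2.2.2 < C}.Infinite := Nat.frequently_atTop_iff_infinite.1 hfreq
    haveI := hinf.to_subtype
    obtain ⟨⟨m₀, i₀⟩, hfib⟩ := Finite.exists_infinite_fiber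
      (fun k : {k | (p k).2.2.2 < C} =>
        ((⟨(p k.1).1, by have h2 := (hpS k.1).2; have h3 := k.2; simp only [mem_setOf_eq] at h3; omega⟩ : Fin C),
         (⟨(p k.1).2.1, by have h2 := (hpS k.1).2; have h3 := k.2; simp only [mem_setOf_eq] at h3; omega⟩ : Fin C)))
    rw [Set.infinite_coe_iff] at hfib
    have hKinf : {k : ℕ | (p k).1 = (m₀ : ℕ) ∧ (p k).2.1 = (i₀ : ℕ)}.Infinite := by
      apply Set.Infinite.mono _ (hfib.image (f := (Subtype.val : {k | (p k).2.2.2 < C} → ℕ)) (Set.injOn_of_injective Subtype.val_injective))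
      intro k hk
      simp only [Set.mem_image] at hk
      obtain ⟨kk, hkk, rfl⟩ := hk
      simp only [Set.mem_preimage, Set.mem_singleton_iff, Prod.mk.injEq] at hkk
      constructor
      · have := congrArg (fun q : Fin C => (q : ℕ)) hkk.1; simpa using this
      · have := congrArg (fun q : Fin C => (q : ℕ)) hkk.2; simpa using this
    -- obtain the common zero point
    obtain ⟨k₀, hk₀⟩ := hKinf.nonempty
    obtain ⟨z, hz⟩ := (hpS k₀).1
    rw [hk₀.2] at hz
    -- frequently, the value of u k at z equals y z
    have hfreq2 : ∃ᶠ k in atTop, (u k).1 z = y.1 z := by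
      apply Nat.frequently_atTop_iff_infinite.2
      apply hKinf.mono
      intro k hk
      simp only [mem_setOf_eq] at hk ⊢
      rw [← hpw k]
      show E (p k).1 z * βf (p k).2.1 z * G (p k).2.2.1 (p k).2.2.2 z + y.1 z = y.1 z
      rw [hk.2, hz]
      ring
    have hev : ∀ᶠ k in atTop, |(u k).1 z - (1 + y.1 z)| < 1/2 := by
      have := Metric.tendsto_nhds.1 (hpt z) (1/2) (by norm_num)
      apply this.mono
      intro k hk
      rwa [Real.dist_eq] at hk
    rcases (hfreq2.and_eventually hev).exists with ⟨k, hk1, hk2⟩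
    rw [hk1] at hk2
    have : |y.1 z - (1 + y.1 z)| = 1 := by
      rw [abs_sub_comm]
      have : 1 + y.1 z - y.1 z = 1 := by ring
      rw [this, abs_one]
    rw [this] at hk2
    norm_num at hk2
  -- conclusion
  refine ⟨fun k => b (p k).2.2.1, fun k => by rw [hbB]; exact mem_range_self _, ?_⟩
  rw [cp_tendsto_iff]
  intro x
  rw [Metric.tendsto_nhds]
  intro ε hε
  have h1 : ∀ᶠ k in atTop, |(u k).1 x - (1 + y.1 x)| < 1/2 := by
    have := Metric.tendsto_nhds.1 (hpt x) (1/2) (by norm_num)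
    apply this.mono
    intro k hk
    rwa [Real.dist_eq] at hk
  have h2 : ∀ᶠ k in atTop, 1/ε < ((p k).2.2.2 : ℝ) := by
    have : ∀ᶠ k in atTop, ⌈1/ε⌉₊ + 1 ≤ (p k).2.2.2 := hninf.eventually_ge_atTop _
    apply this.mono
    intro k hk
    calc 1/ε ≤ (⌈1/ε⌉₊ : ℝ) := Nat.le_ceil _
      _ < ((⌈1/ε⌉₊ : ℕ) + 1 : ℕ) := by exact_mod_cast Nat.lt_succ_self _
      _ ≤ ((p k).2.2.2 : ℝ) := by exact_mod_cast hk
  filter_upwards [h1, h2] with k hk1 hk2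
  rw [Real.dist_eq]
  -- the product is > 1/2 in absolute value, hence G > 0 at x
  have hu : (u k).1 x = E (p k).1 x * βf (p k).2.1 x * G (p k).2.2.1 (p k).2.2.2 x + y.1 x := by
    rw [← hpw k]
  set a := E (p k).1 x * βf (p k).2.1 x * G (p k).2.2.1 (p k).2.2.2 x with ha
  have hane : a ≠ 0 := by
    intro h0
    rw [hu, h0] at hk1
    have : |0 + y.1 x - (1 + y.1 x)| = 1 := by
      have : (0:ℝ) + y.1 x - (1 + y.1 x) = -1 := by ring
      rw [this, abs_neg, abs_one]
    rw [this] at hk1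
    norm_num at hk1
  have hGpos : 0 < 1 - ((p k).2.2.2 : ℝ) * |(b (p k).2.2.1).1 x - y.1 x| := by
    by_contra hng
    push_neg at hng
    have : G (p k).2.2.1 (p k).2.2.2 x = 0 := max_eq_left hng
    apply hane
    rw [ha, this]
    ring
  have hnpos : (0:ℝ) < ((p k).2.2.2 : ℝ) := by
    have h1ε : (0:ℝ) < 1/ε := by positivity
    linarith
  have : |(b (p k).2.2.1).1 x - y.1 x| < 1 / ((p k).2.2.2 : ℝ) := by
    rw [lt_div_iff₀ hnpos]
    nlinarith [hGpos]
  calc |(b (p k).2.2.1).1 x - y.1 x| < 1 / ((p k).2.2.2 : ℝ) := this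
    _ < ε := by
      rw [div_lt_iff₀ hnpos]
      have h1ε : 0 < 1/ε := by positivity
      calc (1:ℝ) = ε * (1/ε) := by field_simp
        _ < ε * ((p k).2.2.2 : ℝ) := by
          apply mul_lt_mul_of_pos_left hk2 hε


lemma cp_sr [CompletelyRegularSpace X] [T2Space X]
    (hsss : StronglySeqSeparable (CpX X)) : IsSRSpace (CpX X) := by
  intro f hf
  rw [continuous_iff_continuousAt]
  intro y₀
  have : Tendsto f (𝓝 y₀) (𝓝 (f y₀)) := by
    rw [Metric.tendsto_nhds]
    intro ε hε
    by_contra hc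
    rw [Filter.not_eventually] at hc
    have hyA : y₀ ∈ closure {u : CpX X | ε ≤ dist (f u) (f y₀)} := by
      rw [mem_closure_iff_frequently]
      apply hc.mono
      intro u hu
      exact not_lt.1 hu
    haveI : SeparableSpace (CpX X) := hsss.1
    obtain ⟨D0, hD0c, hD0d⟩ := exists_countable_dense (CpX X)
    set Dε : Set (CpX X) := {d ∈ D0 | ε/2 ≤ dist (f d) (f y₀)} with hDε
    have hsub : {u : CpX X | ε ≤ dist (f u) (f y₀)} ⊆ closure Dε := by
      intro a ha
      obtain ⟨v, hvD, hvt⟩ := hsss.2 D0 hD0c hD0d a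
      have hfv : Tendsto (fun k => f (v k)) atTop (𝓝 (f a)) := hf v a hvt
      have hev : ∀ᶠ k in atTop, v k ∈ Dε := by
        have h1 : ∀ᶠ k in atTop, dist (f (v k)) (f a) < ε/2 :=
          (Metric.tendsto_nhds.1 hfv) _ (half_pos hε)
        apply h1.mono
        intro k hk
        refine ⟨hvD k, ?_⟩
        have ha' : ε ≤ dist (f a) (f y₀) := ha
        have htri := dist_triangle (f a) (f (v k)) (f y₀)
        have hd : dist (f a) (f (v k)) < ε/2 := by rwa [dist_comm]
        linarith
      exact mem_closure_of_tendsto hvt hev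
    have hycl : y₀ ∈ closure Dε := by
      have h2 := closure_mono hsub
      rw [closure_closure] at h2
      exact h2 hyA
    obtain ⟨u, huD, hut⟩ := cp_extract hsss (hD0c.mono (Set.sep_subset _ _)) hycl
    have hfu := hf u y₀ hut
    have hlt : ∀ᶠ k in atTop, dist (f (u k)) (f y₀) < ε/2 :=
      Metric.tendsto_nhds.1 hfu _ (half_pos hε)
    rcases hlt.exists with ⟨k, hk⟩
    exact absurd hk (not_lt.2 (huD k).2)
  exact this

lemma cp_FU_of_tightness [CompletelyRegularSpace X] [T2Space X]
    (hsss : StronglySeqSeparable (CpX X)) (ht : CountableTightness (CpX X)) :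
    FrechetUrysohnSpace (CpX X) := by
  constructor
  intro s y hy
  obtain ⟨B, hBs, hBc, hyB⟩ := ht s y hy
  obtain ⟨u, huB, hut⟩ := cp_extract hsss hBc hyB
  exact ⟨u, fun n => hBs (huB n), hut⟩

lemma cp_tightness_of_FU (h : FrechetUrysohnSpace (CpX X)) : CountableTightness (CpX X) := by
  intro A y hy
  obtain ⟨u, hu, hut⟩ := mem_closure_iff_seq_limit.1 hy
  exact ⟨Set.range u, Set.range_subset_iff.2 hu, Set.countable_range u,
    mem_closure_of_tendsto hut (Filter.Eventually.of_forall fun n => Set.mem_range_self n)⟩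

lemma cp_tightness_of_lindelof (hL : ∀ n : ℕ, LindelofSpace (Fin n → X)) :
    CountableTightness (CpX X) := by
  classical
  intro A y hy
  have hcov : ∀ q : ℕ × ℕ, ∃ R : Set A, R.Countable ∧
      (univ : Set (Fin q.1 → X)) ⊆
        ⋃ g ∈ R, {x : Fin q.1 → X | ∀ i, |(g : CpX X).1 (x i) - y.1 (x i)| < 1/(q.2+1)} := by
    intro q
    have hop : ∀ g : A, IsOpen {x : Fin q.1 → X | ∀ i, |(g : CpX X).1 (x i) - y.1 (x i)| < 1/(q.2+1)} := by
      intro g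
      have heq : {x : Fin q.1 → X | ∀ i, |(g : CpX X).1 (x i) - y.1 (x i)| < 1/(q.2+1)}
          = ⋂ i, {x : Fin q.1 → X | |(g : CpX X).1 (x i) - y.1 (x i)| < 1/(q.2+1)} := by
        ext x; simp [Set.mem_iInter]
      rw [heq]
      apply isOpen_iInter_of_finite
      intro i
      have hcont : Continuous fun x : Fin q.1 → X => |(g : CpX X).1 (x i) - y.1 (x i)| :=
        (((g : CpX X).2.comp (continuous_apply i)).sub (y.2.comp (continuous_apply i))).abs
      exact isOpen_lt hcont continuous_const
    have hcover : (univ : Set (Fin q.1 → X)) ⊆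
        ⋃ g : A, {x : Fin q.1 → X | ∀ i, |(g : CpX X).1 (x i) - y.1 (x i)| < 1/(q.2+1)} := by
      intro x _
      have hpos : (0:ℝ) < 1/(q.2+1) := by positivity
      obtain ⟨s, hsA, hs⟩ := cp_mem_closure_iff.1 hy (Finset.image x Finset.univ) _ hpos
      exact Set.mem_iUnion.2 ⟨⟨s, hsA⟩, fun i => hs (x i) (Finset.mem_image_of_mem x (Finset.mem_univ i))⟩
    haveI := hL q.1
    obtain ⟨R, hRc, hRcov⟩ := isLindelof_univ.elim_countable_subcover _ hop hcover
    exact ⟨R, hRc, hRcov⟩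
  choose R hRc hRcov using hcov
  refine ⟨⋃ q : ℕ × ℕ, Subtype.val '' (R q), ?_, ?_, ?_⟩
  · apply Set.iUnion_subset
    rintro q _ ⟨g, _, rfl⟩
    exact g.2
  · exact Set.countable_iUnion (fun q => ((hRc q).image _))
  · rw [cp_mem_closure_iff]
    intro F ε hε
    obtain ⟨k, hk⟩ := exists_nat_one_div_lt hε
    set n := F.card with hn
    set xx : Fin n → X := fun i => ((F.equivFin.symm i) : X) with hxx
    have hx := hRcov (n, k) (mem_univ xx)
    rw [Set.mem_iUnion₂] at hx
    obtain ⟨g, hgR, hg⟩ := hx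
    refine ⟨g.1, Set.mem_iUnion.2 ⟨(n,k), Set.mem_image_of_mem _ hgR⟩, ?_⟩
    intro v hv
    have hveq : v = xx (F.equivFin ⟨v, hv⟩) := by simp [hxx]
    rw [hveq]
    exact lt_trans (hg (F.equivFin ⟨v, hv⟩)) hk

lemma cp_omega_sub [CompletelyRegularSpace X] [T2Space X]
    (ht : CountableTightness (CpX X)) (𝒰 : Set (Set X)) (hop : ∀ U ∈ 𝒰, IsOpen U)
    (hω : ∀ F : Finset X, ∃ U ∈ 𝒰, ↑F ⊆ U) :
    ∃ T ⊆ 𝒰, T.Countable ∧ ∀ F : Finset X, ∃ U ∈ T, ↑F ⊆ U := by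
  classical
  set z0 : CpX X := ⟨fun _ => 0, continuous_const⟩ with hz0
  set A : Set (CpX X) := {h | ∃ U ∈ 𝒰, ∀ x, x ∉ U → h.1 x = 1} with hA
  have hz : z0 ∈ closure A := by
    rw [cp_mem_closure_iff]
    intro F ε hε
    obtain ⟨U, hU𝒰, hFU⟩ := hω F
    have hgex : ∀ x : X, ∃ g : X → ℝ, Continuous g ∧ (x ∈ F → g x = 0) ∧ ∀ v, v ∉ U → g v = 1 := by
      intro x
      by_cases hx : x ∈ F
      · obtain ⟨γ₀, hγc, hγx, hγK⟩ := CompletelyRegularSpace.completely_regular x Uᶜ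
          (isOpen_compl_iff.1 (by simpa using (hop U hU𝒰))) (by simp; exact hFU (by exact_mod_cast hx))
        refine ⟨fun v => (γ₀ v : ℝ), continuous_subtype_val.comp hγc, fun _ => by simp [hγx], ?_⟩
        intro v hv
        have h1 := hγK (by simpa using hv)
        simp only [h1]
        rfl
      · exact ⟨fun _ => 1, continuous_const, fun h => absurd h hx, fun _ _ => rfl⟩
    choose g hgc hg0 hg1 using hgex
    refine ⟨⟨fun v => ∏ x ∈ F, g x v, continuous_finset_prod _ fun x _ => hgc x⟩, ⟨U, hU𝒰, ?_⟩, ?_⟩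
    · intro v hv
      show ∏ x ∈ F, g x v = 1
      exact Finset.prod_eq_one fun x _ => hg1 x v hv
    · intro v hv
      show |(∏ x ∈ F, g x v) - z0.1 v| < ε
      have hzero : ∏ x ∈ F, g x v = 0 := Finset.prod_eq_zero hv (hg0 v hv)
      simp [hzero, hz0, hε]
  obtain ⟨B, hBA, hBc, hzB⟩ := ht A z0 hz
  haveI := hBc.to_subtype
  have hU : ∀ h : B, ∃ U ∈ 𝒰, ∀ x, x ∉ U → (h : CpX X).1 x = 1 := fun h => hBA h.2
  choose UU hUU𝒰 hUU1 using hU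
  refine ⟨Set.range UU, Set.range_subset_iff.2 hUU𝒰, Set.countable_range _, ?_⟩
  intro F
  obtain ⟨s, hsB, hs⟩ := cp_mem_closure_iff.1 hzB F 1 one_pos
  refine ⟨UU ⟨s, hsB⟩, Set.mem_range_self _, ?_⟩
  intro x hx
  by_contra hxn
  have h1 := hUU1 ⟨s, hsB⟩ x hxn
  have h2 := hs x (by exact_mod_cast hx)
  rw [h1] at h2
  simp [hz0] at h2


lemma cp_lindelof_of_tightness [CompletelyRegularSpace X] [T2Space X]
    (ht : CountableTightness (CpX X)) (n : ℕ) : LindelofSpace (Fin n → X) := by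
  classical
  constructor
  apply isLindelof_of_countable_subcover
  intro ι O hOop hOcov
  rcases isEmpty_or_nonempty ι with hι | hι
  · refine ⟨∅, countable_empty, ?_⟩
    intro x hx
    rcases mem_iUnion.1 (hOcov hx) with ⟨i, _⟩
    exact (hι.false i).elim
  have hbox : ∀ x : Fin n → X, ∃ (W : Fin n → Set X) (j : ι),
      (∀ i, IsOpen (W i) ∧ x i ∈ W i) ∧ Set.pi univ W ⊆ O j := by
    intro x
    rcases mem_iUnion.1 (hOcov (mem_univ x)) with ⟨j, hj⟩
    rcases isOpen_pi_iff.1 (hOop j) x hj with ⟨I, u, hu, hsub⟩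
    refine ⟨fun i => if i ∈ I then u i else univ, j, ?_, ?_⟩
    · intro i
      by_cases hi : i ∈ I
      · simpa [hi] using hu i hi
      · simp [hi]
    · intro z hz
      apply hsub
      intro i hiI
      have h2 := hz i (mem_univ i)
      have hiI' : i ∈ I := by exact_mod_cast hiI
      simpa [hiI'] using h2
  choose W jx hW hWsub using hbox
  set 𝒰 : Set (Set X) :=
    {U | IsOpen U ∧ ∃ J : Set ι, J.Countable ∧ {z : Fin n → X | ∀ i, z i ∈ U} ⊆ ⋃ j ∈ J, O j} with h𝒰
  have hω : ∀ F : Finset X, ∃ U ∈ 𝒰, ↑F ⊆ U := by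
    intro F
    set K : Set (Fin n → X) := {x | ∀ i, x i ∈ (↑F : Set X)} with hK
    have hKfin : K.Finite := by
      have heq : K = Set.pi univ (fun _ => (↑F : Set X)) := by
        ext x; simp [hK, Set.mem_pi]
      rw [heq]
      exact Set.Finite.pi (fun _ => F.finite_toSet)
    set V : X → Set X := fun v => ⋂ x ∈ K, ⋂ i : Fin n, (if x i = v then W x i else univ) with hV
    have hVopen : ∀ v, IsOpen (V v) := by
      intro v
      apply hKfin.isOpen_biInter
      intro x hx
      apply isOpen_iInter_of_finite
      intro i
      by_cases h : x i = v
      · simpa [h] using (hW x i).1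
      · simp [h]
    have hVmem : ∀ v, v ∈ V v := by
      intro v
      apply mem_iInter₂.2
      intro x hx
      apply mem_iInter.2
      intro i
      by_cases h : x i = v
      · rw [if_pos h, ← h]
        exact (hW x i).2
      · rw [if_neg h]
        exact mem_univ v
    refine ⟨⋃ v ∈ (↑F : Set X), V v, ⟨isOpen_biUnion (fun v _ => hVopen v), ?_⟩, ?_⟩
    · refine ⟨jx '' K, (hKfin.image jx).countable, ?_⟩
      intro z hz
      have hchoice : ∀ i : Fin n, ∃ v, v ∈ (↑F : Set X) ∧ z i ∈ V v := by
        intro i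
        have h1 := hz i
        rcases mem_iUnion₂.1 h1 with ⟨v, hv1, hv2⟩
        exact ⟨v, hv1, hv2⟩
      choose vv hvF hvV using hchoice
      have hvK : vv ∈ K := fun i => hvF i
      have hzW : ∀ i, z i ∈ W vv i := by
        intro i
        have h2 := mem_iInter₂.1 (hvV i) vv hvK
        have h3 := mem_iInter.1 h2 i
        rwa [if_pos rfl] at h3
      have hzpi : z ∈ Set.pi univ (W vv) := fun i _ => hzW i
      exact mem_biUnion (mem_image_of_mem jx hvK) (hWsub vv hzpi)
    · intro v hv
      exact mem_biUnion hv (hVmem v)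
  obtain ⟨T, hT𝒰, hTc, hTω⟩ := cp_omega_sub ht 𝒰 (fun U hU => hU.1) hω
  haveI := hTc.to_subtype
  have hJ : ∀ U : T, ∃ J : Set ι, J.Countable ∧
      {z : Fin n → X | ∀ i, z i ∈ (U : Set X)} ⊆ ⋃ j ∈ J, O j := fun U => (hT𝒰 U.2).2
  choose JJ hJc hJsub using hJ
  refine ⟨⋃ U : T, JJ U, Set.countable_iUnion hJc, ?_⟩
  intro z _
  obtain ⟨U, hUT, hFU⟩ := hTω (Finset.image z Finset.univ)
  have hzU : ∀ i, z i ∈ U := fun i =>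
    hFU (by exact_mod_cast Finset.mem_image_of_mem z (Finset.mem_univ i))
  have hmem := hJsub ⟨U, hUT⟩ hzU
  rcases mem_iUnion₂.1 hmem with ⟨j, hjJ, hjO⟩
  exact mem_iUnion₂.2 ⟨j, mem_iUnion.2 ⟨⟨U, hUT⟩, hjJ⟩, hjO⟩

end CpAux

theorem Cp_stronglySeqSeparable_sR_and_tfae
    (X : Type*) [TopologicalSpace X] [CompletelyRegularSpace X] [T2Space X]
    (hsss : StronglySeqSeparable {f : X → ℝ // Continuous f}) :
    IsSRSpace {f : X → ℝ // Continuous f} ∧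
      List.TFAE
        [ ∀ n : ℕ, LindelofSpace (Fin n → X),
          CountableTightness {f : X → ℝ // Continuous f},
          FrechetUrysohnSpace {f : X → ℝ // Continuous f} ] := by
  refine ⟨cp_sr hsss, ?_⟩
  tfae_have 1 → 2 := fun h => cp_tightness_of_lindelof h
  tfae_have 2 → 3 := fun h => cp_FU_of_tightness hsss h
  tfae_have 3 → 1 := fun h => cp_lindelof_of_tightness (cp_tightness_of_FU h)
  tfae_finish
end
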